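/- arXiv:1511.09092 — 3 statements merged into one kernel-verified Lean document; each statement's English description precedes it below -/
import Mathlib

section
/- Let (W,R) be a frame of finite height h (the associated partial order on W/~_R has no chain of cardinality exceeding h) in which every ~_R-equivalence class (cluster) has cardinality at most N. Then (W,R) is hN-transitive. -/
/-- `relPow R i` is the `i`-fold composition of the relation `R`, with `relPow R 0` the identity. -/
def relPow {W : Type*} (R : W → W → Prop) : ℕ → W → W → Prop
  | 0 => Eq
  | (i+1) => fun x z => ∃ y, relPow R i x y ∧ R y z

section Aux
variable {W : Type*} {R : W → W → Prop}

lemma relPow_to_rtg : ∀ n (x y : W), relPow R n x y → Relation.ReflTransGen R x y := by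
  intro n
  induction n with
  | zero => intro x y hxy; cases hxy; rfl
  | succ n ih =>
    intro x y hxy
    obtain ⟨z, hz, hR⟩ := hxy
    exact (ih x z hz).tail hR

lemma rtg_to_relPow {x y : W} (hxy : Relation.ReflTransGen R x y) : ∃ n, relPow R n x y := by
  induction hxy with
  | refl => exact ⟨0, rfl⟩
  | tail _ hR ih => obtain ⟨n, hn⟩ := ih; exact ⟨n+1, _, hn, hR⟩

lemma relPow_comp {a : ℕ} {x : W} : ∀ b (y z : W),
    relPow R a x y → relPow R b y z → relPow R (a+b) x z := by
  intro b
  induction b with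
  | zero => intro y z h1 h2; cases h2; exact h1
  | succ b ih =>
    intro y z h1 h2
    obtain ⟨w, hw, hR⟩ := h2
    exact ⟨w, ih y w h1 hw, hR⟩

lemma relPow_path {x y : W} : ∀ n, relPow R n x y →
    ∃ f : ℕ → W, f 0 = x ∧ f n = y ∧ ∀ i < n, R (f i) (f (i+1)) := by
  intro n
  induction n generalizing y with
  | zero => intro hxy; cases hxy; exact ⟨fun _ => x, rfl, rfl, fun i hi => absurd hi (Nat.not_lt_zero i)⟩
  | succ n ih =>
    intro hxy
    obtain ⟨w, hw, hR⟩ := hxy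
    obtain ⟨f, hf0, hfn, hstep⟩ := ih hw
    refine ⟨fun i => if i ≤ n then f i else y, by simp [hf0], by simp, ?_⟩
    intro i hi
    rcases Nat.lt_or_ge i n with hlt | hge
    · simp only [if_pos hlt.le, if_pos (Nat.succ_le_of_lt hlt)]
      exact hstep i hlt
    · have : i = n := le_antisymm (Nat.lt_succ_iff.mp hi) hge
      subst this
      simp only [if_pos le_rfl, if_neg (by omega : ¬ i + 1 ≤ i)]
      rw [hfn]; exact hR

lemma path_seg {f : ℕ → W} {n : ℕ} (hstep : ∀ i < n, R (f i) (f (i+1))) :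
    ∀ k i, i + k ≤ n → relPow R k (f i) (f (i+k)) := by
  intro k
  induction k with
  | zero => intro i _; rfl
  | succ k ih =>
    intro i hik
    exact ⟨f (i+k), ih i (by omega), hstep (i+k) (by omega)⟩

end Aux

theorem finite_height_bounded_clusters_pretransitive {W : Type*} (R : W → W → Prop)
    (h N : ℕ)
    -- the skeleton has no chain of cardinality exceeding `h`:
    -- there is no strictly ascending sequence of `h+1` points in the `R*`-preorder
    (hheight : ¬ ∃ c : Fin (h+1) → W, ∀ i : Fin h,
        Relation.ReflTransGen R (c i.castSucc) (c i.succ) ∧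
        ¬ Relation.ReflTransGen R (c i.succ) (c i.castSucc))
    -- every cluster has cardinality at most `N`
    (hclus : ∀ x : W,
        ({y | Relation.ReflTransGen R x y ∧ Relation.ReflTransGen R y x}).Finite ∧
        ({y | Relation.ReflTransGen R x y ∧ Relation.ReflTransGen R y x}).ncard ≤ N) :
    -- the frame is `h*N`-transitive
    ∀ x y : W, Relation.ReflTransGen R x y ↔ ∃ i ≤ h * N, relPow R i x y := by
  classical
  intro x y
  constructor
  · intro hxy
    have hex : ∃ n, relPow R n x y := rtg_to_relPow hxy
    set n0 := Nat.find hex with hn0def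
    have hn0 : relPow R n0 x y := Nat.find_spec hex
    have hmin : ∀ m, m < n0 → ¬ relPow R m x y := fun m hm => Nat.find_min hex hm
    obtain ⟨f, hf0, hfn, hstep⟩ := relPow_path n0 hn0
    -- injectivity of f on [0, n0]
    have hinj : ∀ i j, i < j → j ≤ n0 → f i ≠ f j := by
      intro i j hij hj hfeq
      have h1 : relPow R i x (f i) := by
        have := path_seg hstep i 0 (by omega)
        simpa [hf0] using this
      have h2 : relPow R (n0 - j) (f j) y := by
        have := path_seg hstep (n0 - j) j (by omega)
        rwa [show j + (n0 - j) = n0 by omega, hfn] at this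
      have h3 : relPow R (i + (n0 - j)) x y := relPow_comp _ _ _ h1 (hfeq ▸ h2)
      exact hmin _ (by omega) h3
    -- jump-count function
    set D : ℕ → ℕ := fun i => ∑ j ∈ Finset.range i,
      (if Relation.ReflTransGen R (f (j+1)) (f j) then 0 else 1) with hDdef
    have hDmono : ∀ i j, i ≤ j → D i ≤ D j := by
      intro i j hij
      exact Finset.sum_le_sum_of_subset (Finset.range_subset_range.mpr hij)
    have hDsucc : ∀ i, D (i+1) = D i + (if Relation.ReflTransGen R (f (i+1)) (f i) then 0 else 1) := by
      intro i; exact Finset.sum_range_succ _ i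
    -- same D value ⇒ backward reachability
    have hA : ∀ i k, D (i+k) = D i → Relation.ReflTransGen R (f (i+k)) (f i) := by
      intro i k
      induction k with
      | zero => intro _; rfl
      | succ k ih =>
        intro hD
        have hD' : D (i+k+1) = D i := hD
        have h1 : D (i+k) = D i := le_antisymm
          (le_trans (hDmono _ _ (by omega)) (le_of_eq hD)) (hDmono _ _ (by omega))
        have h2 : D (i+k+1) = D (i+k) := by omega
        rw [hDsucc (i+k)] at h2
        have h3 : Relation.ReflTransGen R (f (i+k+1)) (f (i+k)) := by
          by_contra hc
          rw [if_neg hc] at h2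
          omega
        exact h3.trans (ih h1)
    -- larger D value ⇒ no backward reachability
    have hA' : ∀ i j, i ≤ j → j ≤ n0 → D i < D j → ¬ Relation.ReflTransGen R (f j) (f i) := by
      intro i j hij hj hD hback
      have hsum : ∑ k ∈ Finset.Ico i j,
          (if Relation.ReflTransGen R (f (k+1)) (f k) then 0 else 1) ≠ 0 := by
        have := Finset.sum_Ico_consecutive
          (f := fun k => (if Relation.ReflTransGen R (f (k+1)) (f k) then 0 else 1))
          (Nat.zero_le i) hij
        simp only [← Finset.range_eq_Ico] at this
        simp only [hDdef] at hD
        omega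
      obtain ⟨k, hk, hkne⟩ := Finset.exists_ne_zero_of_sum_ne_zero hsum
      rw [Finset.mem_Ico] at hk
      have hknr : ¬ Relation.ReflTransGen R (f (k+1)) (f k) := by
        by_contra hc; rw [if_pos hc] at hkne; exact hkne rfl
      apply hknr
      have hseg1 : Relation.ReflTransGen R (f (k+1)) (f j) := by
        have := path_seg hstep (j - (k+1)) (k+1) (by omega)
        rw [show k + 1 + (j - (k+1)) = j by omega] at this
        exact relPow_to_rtg _ _ _ this
      have hseg2 : Relation.ReflTransGen R (f i) (f k) := by
        have := path_seg hstep (k - i) i (by omega)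
        rw [show i + (k - i) = k by omega] at this
        exact relPow_to_rtg _ _ _ this
      exact (hseg1.trans hback).trans hseg2
    -- same D value (both ≤ n0) ⇒ same cluster, forward direction
    have hsame : ∀ i j, i ≤ n0 → j ≤ n0 → D i = D j → Relation.ReflTransGen R (f i) (f j) := by
      intro i j hi hj hD
      rcases le_total i j with hij | hij
      · have := path_seg hstep (j - i) i (by omega)
        rw [show i + (j - i) = j by omega] at this
        exact relPow_to_rtg _ _ _ this
      · have := hA j (i - j)
        rw [show j + (i - j) = i by omega] at this
        exact this hD
    -- intermediate values of D
    have hval : ∀ i, ∀ v ≤ D i, ∃ j ≤ i, D j = v := by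
      intro i
      induction i with
      | zero =>
        intro v hv
        have hD0 : D 0 = 0 := by simp [hDdef]
        exact ⟨0, le_rfl, by omega⟩
      | succ i ih =>
        intro v hv
        rcases le_or_gt v (D i) with hvi | hvi
        · obtain ⟨j, hj, hDj⟩ := ih v hvi
          exact ⟨j, by omega, hDj⟩
        · refine ⟨i+1, le_rfl, ?_⟩
          have := hDsucc i
          split at this <;> omega
    -- the number of jumps is < h
    have hDn0 : D n0 < h := by
      by_contra hc
      push_neg at hc
      have hch : ∀ v : Fin (h+1), ∃ j, j ≤ n0 ∧ D j = (v : ℕ) := by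
        intro v
        obtain ⟨j, hj, hDj⟩ := hval n0 (v : ℕ) (le_trans (by omega) hc)
        exact ⟨j, hj, hDj⟩
      choose g hg1 hg2 using hch
      apply hheight
      refine ⟨fun v => f (g v), ?_⟩
      intro i
      have hc1 := hg1 i.castSucc
      have hc2 := hg1 i.succ
      have hvals : D (g i.castSucc) = (i : ℕ) ∧ D (g i.succ) = (i : ℕ) + 1 := by
        constructor
        · rw [hg2 i.castSucc]; simp
        · rw [hg2 i.succ]; simp
      have hlt : g i.castSucc ≤ g i.succ := by
        by_contra hgt
        push_neg at hgt
        have := hDmono _ _ hgt.le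
        omega
      constructor
      · have := path_seg hstep (g i.succ - g i.castSucc) (g i.castSucc) (by omega)
        rw [show g i.castSucc + (g i.succ - g i.castSucc) = g i.succ by omega] at this
        exact relPow_to_rtg _ _ _ this
      · exact hA' _ _ hlt (hg1 _) (by omega)
    -- counting
    have hcard : (Finset.range (n0+1)).card ≤ N * ((Finset.range (n0+1)).image D).card := by
      apply Finset.card_le_mul_card_image
      intro v hv
      obtain ⟨i0, hi0mem, hi0⟩ := Finset.mem_image.mp hv
      rw [Finset.mem_range] at hi0mem
      obtain ⟨hfin, hle⟩ := hclus (f i0)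
      calc ((Finset.range (n0+1)).filter fun i => D i = v).card
          ≤ hfin.toFinset.card := by
            apply Finset.card_le_card_of_injOn f
            · intro i hi
              rw [Finset.mem_coe, Finset.mem_filter, Finset.mem_range] at hi
              rw [Finset.mem_coe, Set.Finite.mem_toFinset]
              refine ⟨hsame i0 i (by omega) (by omega) (by omega), hsame i i0 (by omega) (by omega) (by omega)⟩
            · intro i hi j hj hfeq
              rw [Finset.coe_filter, Set.mem_setOf_eq, Finset.mem_range] at hi hj
              by_contra hne
              rcases Nat.lt_or_ge i j with hij | hij
              · exact hinj i j hij (by omega) hfeq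
              · exact hinj j i (by omega) (by omega) hfeq.symm
        _ ≤ N := by rwa [← Set.ncard_eq_toFinset_card _ hfin]
    have himg : ((Finset.range (n0+1)).image D).card ≤ h := by
      calc ((Finset.range (n0+1)).image D).card ≤ (Finset.range h).card := by
            apply Finset.card_le_card
            intro v hv
            obtain ⟨i, hi, hDi⟩ := Finset.mem_image.mp hv
            rw [Finset.mem_range] at hi ⊢
            have := hDmono i n0 (by omega)
            omega
        _ = h := Finset.card_range h
    rw [Finset.card_range] at hcard
    have hfinal : n0 + 1 ≤ N * h :=
      le_trans hcard (Nat.mul_le_mul_left N himg)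
    exact ⟨n0, by rw [Nat.mul_comm]; omega, hn0⟩
  · intro ⟨i, _, hi⟩
    exact relPow_to_rtg _ _ _ hi
end

section
/- Let (W,R) be a frame with R* = W × W. For any k > 0 there exists d > 0 such that d divides k, d divides the length of every loop in (W,R), and ⪯_d ⊆ ⪯_k (whenever there is a path from w to v of length divisible by d, there is also one of length divisible by k). -/
theorem relPow_add {W : Type*} {R : W → W → Prop} {m n : ℕ} {x y z : W}
    (h1 : relPow R m x y) (h2 : relPow R n y z) : relPow R (m + n) x z := by
  induction n generalizing z with
  | zero => exact h2 ▸ h1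
  | succ n ih => obtain ⟨u, hu, hz⟩ := h2; exact ⟨u, ih hu, hz⟩

theorem relPow_mul {W : Type*} {R : W → W → Prop} {n : ℕ} {x : W}
    (h : relPow R n x x) (c : ℕ) : relPow R (c * n) x x := by
  induction c with
  | zero => rw [Nat.zero_mul]; exact rfl
  | succ c ih => rw [Nat.succ_mul]; exact relPow_add ih h

theorem reflTransGen_relPow {W : Type*} {R : W → W → Prop} {x y : W}
    (h : Relation.ReflTransGen R x y) : ∃ n, relPow R n x y := by
  induction h with
  | refl => exact ⟨0, rfl⟩
  | tail _ hr ih => obtain ⟨n, hn⟩ := ih; exact ⟨n + 1, _, hn, hr⟩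

theorem exists_divisor_of_loops {W : Type*} (R : W → W → Prop)
    (huniv : ∀ x y : W, Relation.ReflTransGen R x y)
    (k : ℕ) (hk : k > 0) :
    ∃ d : ℕ, d > 0 ∧ d ∣ k ∧
      (∀ (x : W) (n : ℕ), relPow R n x x → d ∣ n) ∧
      (∀ w v : W, (∃ n : ℕ, relPow R n w v ∧ d ∣ n) →
        ∃ n : ℕ, relPow R n w v ∧ k ∣ n) := by
  classical
  haveI : NeZero k := ⟨hk.ne'⟩
  set Lset : Set ℤ := {z | z = (k : ℤ) ∨ ∃ n : ℕ, (n : ℤ) = z ∧ ∃ x, relPow R n x x}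
    with hLset
  set H := AddSubgroup.closure Lset with hH
  obtain ⟨a, ha⟩ := Int.subgroup_cyclic H
  have hkH : (k : ℤ) ∈ H := AddSubgroup.subset_closure (Or.inl rfl)
  have hloopH : ∀ (x : W) (n : ℕ), relPow R n x x → (n : ℤ) ∈ H := fun x n h =>
    AddSubgroup.subset_closure (Or.inr ⟨n, rfl, x, h⟩)
  have hHdvd : ∀ z ∈ H, a ∣ z := by
    intro z hz
    rw [ha, AddSubgroup.mem_closure_singleton] at hz
    obtain ⟨c, hc⟩ := hz
    exact ⟨c, by rw [← hc, smul_eq_mul]; ring⟩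
  have hdvdH : ∀ z : ℤ, a ∣ z → z ∈ H := by
    intro z ⟨c, hc⟩
    rw [ha, AddSubgroup.mem_closure_singleton]
    exact ⟨c, by rw [hc, smul_eq_mul]; ring⟩
  set d := a.natAbs with hd
  have hadk : a ∣ (k : ℤ) := hHdvd _ hkH
  have hdk : d ∣ k := Int.ofNat_dvd.mp (Int.natAbs_dvd.mpr hadk)
  have hdpos : 0 < d := by
    rcases Nat.eq_zero_or_pos d with h0 | h
    · exfalso
      have : a = 0 := Int.natAbs_eq_zero.mp h0
      rw [this] at hadk
      exact hk.ne' (Int.ofNat_eq_zero.mp (zero_dvd_iff.mp hadk))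
    · exact h
  refine ⟨d, hdpos, hdk, ?_, ?_⟩
  · intro x n h
    exact Int.ofNat_dvd.mp (Int.natAbs_dvd.mpr (hHdvd _ (hloopH x n h)))
  · rintro w v ⟨n, hpath, hdn⟩
    -- key claim: every element of H is congruent mod k to a loop length at v
    have key : ∀ z ∈ H, ∃ t : ℕ, relPow R t v v ∧ ((t : ZMod k) = ((z : ℤ) : ZMod k)) := by
      intro z hz
      induction hz using AddSubgroup.closure_induction with
      | mem z hzmem =>
        rcases hzmem with h | ⟨l, hl, x, hloop⟩
        · exact ⟨0, rfl, by rw [h]; push_cast [ZMod.natCast_self]; ring⟩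
        · obtain ⟨p, hp⟩ := reflTransGen_relPow (huniv v x)
          obtain ⟨q, hq⟩ := reflTransGen_relPow (huniv x v)
          have h0 : relPow R (p + q) v v := relPow_add hp hq
          have h1 : relPow R (p + l + q) v v := relPow_add (relPow_add hp hloop) hq
          refine ⟨(p + l + q) + (k - 1) * (p + q),
            relPow_add h1 (relPow_mul h0 (k - 1)), ?_⟩
          have hk1 : ((k - 1 : ℕ) : ZMod k) = -1 := by
            have : ((k - 1 : ℕ) : ZMod k) + 1 = 0 := by
              rw [← Nat.cast_one (R := ZMod k), ← Nat.cast_add,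
                Nat.sub_add_cancel hk, ZMod.natCast_self]
            linear_combination this
          push_cast
          rw [hk1, ← hl]
          push_cast
          ring
      | zero => exact ⟨0, rfl, by push_cast; ring⟩
      | add z1 z2 _ _ ih1 ih2 =>
        obtain ⟨t1, ht1, hc1⟩ := ih1
        obtain ⟨t2, ht2, hc2⟩ := ih2
        exact ⟨t1 + t2, relPow_add ht1 ht2, by push_cast; rw [hc1, hc2]⟩
      | neg z _ ih =>
        obtain ⟨t, ht, hc⟩ := ih
        refine ⟨(k - 1) * t, relPow_mul ht (k - 1), ?_⟩
        have hk1 : ((k - 1 : ℕ) : ZMod k) = -1 := by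
          have : ((k - 1 : ℕ) : ZMod k) + 1 = 0 := by
            rw [← Nat.cast_one (R := ZMod k), ← Nat.cast_add,
              Nat.sub_add_cancel hk, ZMod.natCast_self]
          linear_combination this
        push_cast
        rw [hk1, hc]
        push_cast
        ring
    have hnH : (-(n : ℤ)) ∈ H := by
      refine neg_mem (hdvdH _ ?_)
      exact dvd_trans (Int.dvd_natAbs.mpr dvd_rfl) (Int.natCast_dvd_natCast.mpr hdn)
    obtain ⟨t, ht, hc⟩ := key _ hnH
    refine ⟨n + t, relPow_add hpath ht, ?_⟩
    have : ((n + t : ℕ) : ZMod k) = 0 := by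
      push_cast
      rw [hc]
      push_cast
      ring
    exact (ZMod.natCast_eq_zero_iff _ _).mp this
end

section
/- Let F = (W,R) be a frame and 𝒜 a proper (regular) partition of W, meaning: for all U, V ∈ 𝒜, if some u ∈ U has u R v for some v ∈ V, then every u ∈ U has u R v for some v ∈ V. Then the modal algebra of the minimal filtration F_𝒜 embeds into the modal algebra of F; consequently every modal formula valid in F is valid in F_𝒜. -/
/-- The relation of the minimal filtration of `(W,R)` by the equivalence `E`. -/
def filtRel {W : Type*} (R E : W → W → Prop) (U V : Quot E) : Prop :=
  ∃ u v : W, Quot.mk E u = U ∧ Quot.mk E v = V ∧ R u v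

/-- The diamond operation of the modal algebra of a frame: `◇_S(A)` is the `S`-preimage of `A`. -/
def diaOp {α : Type*} (S : α → α → Prop) (A : Set α) : Set α := {w | ∃ v ∈ A, S w v}

/-- Modal formulas. -/
inductive MF where
  | var : ℕ → MF
  | bot : MF
  | imp : MF → MF → MF
  | dia : MF → MF

/-- Kripke satisfaction. -/
def Sat {W : Type*} (R : W → W → Prop) (θ : ℕ → Set W) : W → MF → Prop
  | w, .var n => w ∈ θ n
  | _, .bot => False
  | w, .imp φ ψ => Sat R θ w φ → Sat R θ w ψ
  | w, .dia φ => ∃ v, R w v ∧ Sat R θ v φ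

/-- Validity in a frame. -/
def Valid {W : Type*} (R : W → W → Prop) (φ : MF) : Prop :=
  ∀ (θ : ℕ → Set W) (w : W), Sat R θ w φ


lemma quotmk_eq_iff {W : Type*} {E : W → W → Prop} (hE : Equivalence E) {a b : W}
    (h : Quot.mk E a = Quot.mk E b) : E a b := by
  exact (Equivalence.eqvGen_iff hE).mp (Quot.eqvGen_exact h)

lemma sat_lift {W : Type*} (R E : W → W → Prop) (hE : Equivalence E)
    (hproper : ∀ u u' v : W, E u u' → R u v → ∃ v', E v v' ∧ R u' v')
    (θ : ℕ → Set (Quot E)) :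
    ∀ (φ : MF) (x : W),
      Sat (filtRel R E) θ (Quot.mk E x) φ ↔ Sat R (fun n => {x | Quot.mk E x ∈ θ n}) x φ := by
  intro φ
  induction φ with
  | var n => intro x; rfl
  | bot => intro x; rfl
  | imp φ ψ ih1 ih2 =>
      intro x
      constructor
      · intro h hx; exact (ih2 x).mp (h ((ih1 x).mpr hx))
      · intro h hx; exact (ih2 x).mpr (h ((ih1 x).mp hx))
  | dia φ ih =>
      intro x
      constructor
      · rintro ⟨V, ⟨u, v, hu, hv, Ruv⟩, hsat⟩
        obtain ⟨v', hvv', Rxv'⟩ := hproper u x v (quotmk_eq_iff hE hu) Ruv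
        refine ⟨v', Rxv', (ih v').mp ?_⟩
        have : Quot.mk E v' = V := by rw [← hv]; exact (Quot.sound hvv').symm
        rwa [this]
      · rintro ⟨v, Rxv, hsat⟩
        exact ⟨Quot.mk E v, ⟨x, v, rfl, rfl, Rxv⟩, (ih v).mpr hsat⟩

theorem proper_partition_embedding {W : Type*} (R : W → W → Prop)
    (E : W → W → Prop) (hE : Equivalence E)
    -- the partition into `E`-classes is proper (regular):
    (hproper : ∀ u u' v : W, E u u' → R u v → ∃ v', E v v' ∧ R u' v') :
    letI e : Set (Quot E) → Set W := fun B => {x | Quot.mk E x ∈ B}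
    -- `e` embeds the modal algebra of the filtration into the modal algebra of `F`:
    Function.Injective e ∧
    (e ∅ = ∅) ∧ (e Set.univ = Set.univ) ∧
    (∀ B C, e (B ∪ C) = e B ∪ e C) ∧
    (∀ B C, e (B ∩ C) = e B ∩ e C) ∧
    (∀ B, e Bᶜ = (e B)ᶜ) ∧
    (∀ B, e (diaOp (filtRel R E) B) = diaOp R (e B)) ∧
    -- consequently, every modal formula valid in `F` is valid in `F_𝒜`:
    (∀ φ : MF, Valid R φ → Valid (filtRel R E) φ) := by
  refine ⟨?_, rfl, rfl, fun B C => rfl, fun B C => rfl, fun B => rfl, ?_, ?_⟩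
  · intro B C h
    ext V
    obtain ⟨x, rfl⟩ := Quot.exists_rep V
    constructor
    · intro hx; exact Set.ext_iff.mp h x |>.mp hx
    · intro hx; exact Set.ext_iff.mp h x |>.mpr hx
  · intro B
    ext x
    simp only [diaOp, Set.mem_setOf_eq]
    constructor
    · rintro ⟨V, hV, u, v, hu, hv, Ruv⟩
      obtain ⟨v', hvv', Rxv'⟩ := hproper u x v (quotmk_eq_iff hE hu) Ruv
      refine ⟨v', ?_, Rxv'⟩
      have : Quot.mk E v' = V := by rw [← hv]; exact (Quot.sound hvv').symm
      show Quot.mk E v' ∈ B; rwa [this]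
    · rintro ⟨v, hv, Rxv⟩
      exact ⟨Quot.mk E v, hv, x, v, rfl, rfl, Rxv⟩
  · intro φ hval θ V
    obtain ⟨x, rfl⟩ := Quot.exists_rep V
    exact (sat_lift R E hE hproper θ φ x).mpr (hval _ x)
end
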